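/- arXiv:2107.09590 — 2 statements merged into one kernel-verified Lean document; each statement's English description precedes it below -/
import Mathlib

section
/- Let X and X' be disjoint alphabets each of cardinality c, and define h_j(X−X') := Σ_{p+q=j}(-1)^q h_p(X)e_q(X'). Then for every r ≥ 1: h_{c+r}(X−X') = Σ_{i=1}^{c} (-1)^{c-i} · s(r−1, c−i)(X) · h_i(X−X'), where s(i,j)(X) := Σ_{k+l=j}(-1)^k h_{i+k+1}(X) e_l(X) is the hook Schur polynomial of X. -/
open Finset

variable {R : Type*} [CommRing R]

/-- The elementary symmetric polynomial `e k` of a finite family of ring elements. -/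
def esym {ι : Type*} [Fintype ι] [DecidableEq ι] (x : ι → R) (k : ℕ) : R :=
  ∑ s ∈ Finset.univ.powersetCard k, ∏ i ∈ s, x i

/-- The complete homogeneous symmetric polynomial `h k` of a finite family of ring
elements (sum of all monomials of degree `k`). -/
def hsym {ι : Type*} [Fintype ι] [DecidableEq ι] (x : ι → R) (k : ℕ) : R :=
  ∑ μ : Sym ι k, (μ.1.map x).prod

/-- The hook Schur polynomial `s(i,j) = s_{(i+1,1^j)}` of a finite family. -/
def hookS {ι : Type*} [Fintype ι] [DecidableEq ι] (x : ι → R) (i j : ℕ) : R :=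
  ∑ p ∈ Finset.HasAntidiagonal.antidiagonal j, (-1 : R) ^ p.1 * hsym x (i + p.1 + 1) * esym x p.2

/-- The complete symmetric function `h j` of the difference alphabet `X - X'`. -/
def hdiff {ι κ : Type*} [Fintype ι] [DecidableEq ι] [Fintype κ] [DecidableEq κ]
    (x : ι → R) (x' : κ → R) (j : ℕ) : R :=
  ∑ p ∈ Finset.HasAntidiagonal.antidiagonal j, (-1 : R) ^ p.2 * hsym x p.1 * esym x' p.2

/-- The elementary symmetric function `e j` of the difference alphabet `X - X'`. -/
def ediff {ι κ : Type*} [Fintype ι] [DecidableEq ι] [Fintype κ] [DecidableEq κ]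
    (x : ι → R) (x' : κ → R) (j : ℕ) : R :=
  ∑ p ∈ Finset.HasAntidiagonal.antidiagonal j, (-1 : R) ^ p.2 * esym x p.1 * hsym x' p.2

/-- The power sum `p k` of a finite family of ring elements. -/
def psum' {ι : Type*} [Fintype ι] (x : ι → R) (k : ℕ) : R :=
  ∑ i, x i ^ k

/-- The elementary symmetric polynomial of a multiset of ring elements. -/
def esymM (s : Multiset R) (k : ℕ) : R :=
  ((s.powersetCard k).map Multiset.prod).sum

/-!
Let `E_X(t) = ∑ (-1)^n e_n(X) t^n = ∏ (1 - x_i t)` and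
`H_X(t) = ∑ h_n(X) t^n = ∏ (1 - x_i t)⁻¹`, so `E_X H_X = 1`.
The generating series of `h_j(X - X')` is `H_X E_{X'}`, and that of the signed hooks
`(-1)^j s(i,j)(X)` is `H_X^{>i} E_X`, where `H_X^{>i}(t) = ∑ h_{k+i+1}(X) t^k`.
Their product is `H_X^{>i} E_{X'}`; as `E_{X'}` is a polynomial of degree `c`,
its `t^c` coefficient is `h_{c+i+1}(X - X')`. Read off the product, the same coefficient
is the claimed sum plus `s(i,c)(X) h_0(X - X')`, and `s(i,c)(X) = 0` by the same
truncation argument: `(-1)^c s(i,c)(X)` is the `t^{c+i+1}` coefficient of `E_X H_X = 1`.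
-/

open PowerSeries

theorem PowerSeries.coeff_add_mul_of_coeff_eq_zero {φ ψ : R⟦X⟧} {c : ℕ}
    (hψ : ∀ l, c < l → coeff l ψ = 0) (r : ℕ) :
    coeff (c + r) (φ * ψ) = coeff c (mk (fun k => coeff (k + r) φ) * ψ) := by
  simp only [coeff_mul, coeff_mk]
  rw [← Nat.sum_antidiagonal_swap, ← Nat.sum_antidiagonal_swap (n := c)]
  simp only [Nat.sum_antidiagonal_eq_sum_range_succ_mk, Prod.swap_prod_mk]
  rw [← sum_subset (range_subset_range.2 (by omega : c + 1 ≤ c + r + 1))]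
  · refine sum_congr rfl fun k hk => ?_
    rw [mem_range] at hk
    rw [show c + r - k = c - k + r by omega]
  · intro k _ hk
    rw [mem_range] at hk
    rw [hψ k (by omega), mul_zero]

theorem Finset.Nat.sum_antidiagonal_eq_add_sum_Icc {M : Type*} [AddCommMonoid M]
    (f : ℕ → ℕ → M) (n : ℕ) :
    ∑ p ∈ antidiagonal n, f p.1 p.2 = f n 0 + ∑ i ∈ Icc 1 n, f (n - i) i := by
  rw [← Nat.sum_antidiagonal_swap, Nat.sum_antidiagonal_eq_sum_range_succ_mk, range_eq_Ico,
    sum_eq_sum_Ico_succ_bot n.succ_pos]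
  simp [Ico_add_one_right_eq_Icc]

section Families

variable {ι : Type*} [Fintype ι] [DecidableEq ι] (x : ι → R)

theorem esym_eq_zero_of_card_lt {k : ℕ} (h : Fintype.card ι < k) : esym x k = 0 := by
  rw [esym, powersetCard_eq_empty.2 (by simpa using h), sum_empty]

theorem coeff_prod_one_sub_C_mul_X (k : ℕ) :
    coeff k (∏ i, (1 - C (x i) * X)) = (-1) ^ k * esym x k := by
  have expand :
      ∏ i, (1 - C (x i) * X) = ∑ t ∈ univ.powerset, C (∏ i ∈ t, -x i) * X ^ #t := by
    simp_rw [sub_eq_add_neg, prod_one_add, ← neg_mul, ← map_neg, prod_mul_distrib, map_prod,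
      prod_const]
  simp_rw [expand, map_sum, coeff_C_mul_X_pow, prod_neg, esym, mul_sum, ← sum_filter,
    powersetCard_eq_filter]
  refine sum_congr (by ext; simp [eq_comm]) fun t ht => ?_
  rw [(mem_filter.1 ht).2]

theorem mk_pow_mul_one_sub_C_mul_X (a : R) : mk (fun n => a ^ n) * (1 - C a * X) = 1 := by
  simpa [rescale_mk] using congrArg (rescale a) (mk_one_mul_one_sub_eq_one R)

theorem coeff_prod_mk_pow (k : ℕ) : coeff k (∏ i, mk fun n => x i ^ n) = hsym x k := by
  rw [coeff_prod, hsym]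
  simp only [coeff_mk]
  symm
  refine sum_bij' (fun μ _ => Multiset.toFinsupp μ.1) (fun l hl => ⟨Finsupp.toMultiset l, ?_⟩)
    (fun μ _ => ?_) (fun _ _ => mem_univ _)
    (fun μ _ => Subtype.ext (Multiset.toFinsupp_toMultiset _))
    (fun l _ => Finsupp.toMultiset_toFinsupp l) (fun μ _ => ?_)
  · rw [mem_finsuppAntidiag] at hl
    rw [Finsupp.card_toMultiset, ← hl.1, Finsupp.sum_fintype _ _ fun _ => rfl]
    rfl
  · rw [mem_finsuppAntidiag]
    exact ⟨Multiset.sum_count_eq_card (fun _ _ => mem_univ _) |>.trans μ.2, subset_univ _⟩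
  · rw [prod_multiset_map_count]
    refine prod_subset (subset_univ _) fun i _ hi => ?_
    simp_all

theorem mk_signed_esym_mul_mk_hsym :
    mk (fun n => (-1) ^ n * esym x n) * mk (hsym x) = 1 := by
  have hE : mk (fun n => (-1) ^ n * esym x n) = ∏ i, (1 - C (x i) * X) := by
    ext k; rw [coeff_mk, coeff_prod_one_sub_C_mul_X]
  have hH : mk (hsym x) = ∏ i, mk fun n => x i ^ n := by
    ext k; rw [coeff_mk, coeff_prod_mk_pow]
  rw [hE, hH, ← prod_mul_distrib]
  exact prod_eq_one fun i _ => by rw [mul_comm, mk_pow_mul_one_sub_C_mul_X]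

theorem mk_signed_hookS (i : ℕ) :
    mk (fun j => (-1) ^ j * hookS x i j) =
      mk (fun k => hsym x (k + (i + 1))) * mk (fun n => (-1) ^ n * esym x n) := by
  ext j
  simp only [coeff_mk, coeff_mul, hookS, mul_sum]
  refine sum_congr rfl fun p hp => ?_
  obtain rfl := mem_antidiagonal.1 hp
  have hsq : ((-1 : R) ^ p.1) ^ 2 = 1 := by
    rw [← pow_mul, mul_comm, pow_mul, neg_one_sq, one_pow]
  rw [show i + p.1 + 1 = p.1 + (i + 1) by ring, pow_add]
  linear_combination (hsym x (p.1 + (i + 1)) * (-1) ^ p.2 * esym x p.2) * hsq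

theorem hookS_eq_zero_of_card_le (i : ℕ) {j : ℕ} (h : Fintype.card ι ≤ j) :
    hookS x i j = 0 := by
  have hE : ∀ l, j < l → coeff l (mk fun n => (-1) ^ n * esym x n) = 0 := fun l hl => by
    rw [coeff_mk, esym_eq_zero_of_card_lt x (by omega), mul_zero]
  have hcoeff := coeff_add_mul_of_coeff_eq_zero (φ := mk (hsym x)) hE (i + 1)
  rw [mul_comm (PowerSeries.mk _), mk_signed_esym_mul_mk_hsym, coeff_one, if_neg (by omega)]
    at hcoeff
  simpa only [coeff_mk, ← mk_signed_hookS, neg_one_pow_mul_eq_zero_iff] using hcoeff.symm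

end Families

theorem mk_hdiff {ι κ : Type*} [Fintype ι] [DecidableEq ι] [Fintype κ] [DecidableEq κ]
    (x : ι → R) (x' : κ → R) :
    mk (hdiff x x') = mk (hsym x) * mk (fun n => (-1) ^ n * esym x' n) := by
  ext j
  simp only [coeff_mk, coeff_mul, hdiff]
  exact sum_congr rfl fun p _ => by ring

theorem hdiff_reduction (c : ℕ) (x x' : Fin c → R) (r : ℕ) (hr : 1 ≤ r) :
    hdiff x x' (c + r) =
      ∑ i ∈ Finset.Icc 1 c, (-1 : R) ^ (c - i) * hookS x (r - 1) (c - i) * hdiff x x' i := by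
  obtain ⟨i, rfl⟩ : ∃ i, r = i + 1 := ⟨r - 1, by omega⟩
  set E' := mk fun n => (-1 : R) ^ n * esym x' n
  have hE' : ∀ l, c < l → coeff l E' = 0 := fun l hl => by
    rw [coeff_mk, esym_eq_zero_of_card_lt x' (by simpa using hl), mul_zero]
  have hseries : mk (fun j => (-1) ^ j * hookS x i j) * mk (hdiff x x') =
      mk (fun k => hsym x (k + (i + 1))) * E' := by
    rw [mk_signed_hookS, mk_hdiff, mul_assoc, ← mul_assoc _ (PowerSeries.mk (hsym x)),
      mk_signed_esym_mul_mk_hsym, one_mul]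
  calc hdiff x x' (c + (i + 1))
      = coeff c (mk (fun j => (-1) ^ j * hookS x i j) * mk (hdiff x x')) := by
        rw [hseries, ← coeff_mk _ (hdiff x x'), mk_hdiff, coeff_add_mul_of_coeff_eq_zero hE']
        simp only [coeff_mk]
    _ = ∑ p ∈ antidiagonal c, (-1 : R) ^ p.1 * hookS x i p.1 * hdiff x x' p.2 := by
        simp only [coeff_mul, coeff_mk]
    _ = _ := by
        rw [Nat.sum_antidiagonal_eq_add_sum_Icc
            (fun j l => (-1 : R) ^ j * hookS x i j * hdiff x x' l),
          hookS_eq_zero_of_card_le x i (Fintype.card_fin c).le, mul_zero, zero_mul, zero_add,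
          Nat.add_sub_cancel]
end

section
/- (Stability of curvature) Let 1 ≤ c ≤ d, let X = {x_1,...,x_d} and X' = {x'_1,...,x'_d} be disjoint alphabets, and let S ⊆ {1,...,c} with sub-alphabets X_S = {x_i : i ∈ S} and X'_S = {x'_i : i ∈ S}. Define h_k(X_S − X'_S) := Σ_{p+q=k}(-1)^q h_p(X_S) e_q(X'_S). Define φ(v_k) := v_k + (-1)^{c-k} Σ_{l=c+1}^{d} s(l−c−1, c−k)(x_1,...,x_c) · v_l for 1 ≤ k ≤ c, where s(p,q) is the hook Schur polynomial. Then in k[X,X',v_1,...,v_d]: Σ_{k=1}^{c} h_k(X_S − X'_S) · φ(v_k) = Σ_{k=1}^{d} h_k(X_S − X'_S) · v_k. -/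
open Finset

variable {R : Type*} [CommRing R]

/-! Let `F = H(X_S) E(X'_S)` be the generating series of `h_k(X_S - X'_S)`, and `E_c`, `H_c`
those of `(-1)^k e_k` and `h_k` in `x_1, …, x_c`. Then `E_c F` is the `E`-series of the auxiliary
alphabet `({x_1, …, x_c} ∖ X_S) ∪ X'_S` of cardinality `c`, so it is a polynomial of degree at
most `c`, and `F = H_c (E_c F)`. Reading off the coefficient of degree `l > c` expresses
`h_l(X_S - X'_S)` through `h_1, …, h_c(X_S - X'_S)`, with coefficients
`∑_{i ≤ c-k} (-1)^i e_i h_{l-k-i} = (-1)^(c-k) s(l-c-1, c-k)` in `x_1, …, x_c`;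
the degree-`0` term drops out because `E_c H_c = 1`. -/

open PowerSeries

section GeneratingFunctions

variable {ι κ : Type*} [Fintype ι] [Fintype κ]

noncomputable def esymSeries (x : ι → R) : R⟦X⟧ :=
  ∏ i, (1 - C (x i) * X)

noncomputable def hsymSeries (x : ι → R) : R⟦X⟧ :=
  ∏ i, PowerSeries.mk fun n => x i ^ n

theorem one_sub_C_mul_X_mul_mk_pow (a : R) :
    (1 - C a * X) * PowerSeries.mk (fun n => a ^ n) = 1 := by
  simpa only [map_mul, map_sub, map_one, rescale_X, rescale_mk, Pi.one_apply, mul_one,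
    mul_comm] using congrArg (rescale a) (mk_one_mul_one_sub_eq_one (S := R))

theorem esymSeries_mul_hsymSeries (x : ι → R) : esymSeries x * hsymSeries x = 1 := by
  simp only [esymSeries, hsymSeries, ← prod_mul_distrib, one_sub_C_mul_X_mul_mk_pow,
    prod_const_one]

theorem esymSeries_sumElim (x : ι → R) (y : κ → R) :
    esymSeries (Sum.elim x y) = esymSeries x * esymSeries y :=
  Fintype.prod_sum_type _

variable [DecidableEq ι] [DecidableEq κ]

theorem coeff_esymSeries (x : ι → R) (n : ℕ) :
    coeff n (esymSeries x) = (-1) ^ n * esym x n := by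
  have hexp : esymSeries x = ∑ t ∈ univ.powerset, C (∏ i ∈ t, -x i) * X ^ t.card := by
    simp only [esymSeries, sub_eq_add_neg, ← neg_mul, ← map_neg, prod_one_add, map_prod,
      prod_mul_distrib, prod_const]
  simp only [hexp, map_sum, coeff_C_mul_X_pow, esym, mul_sum, powersetCard_eq_filter,
    sum_filter]
  refine sum_congr rfl fun t _ => ?_
  by_cases ht : t.card = n
  · simp [ht, prod_neg]
  · simp [ht, Ne.symm ht]

theorem coeff_esymSeries_eq_zero (x : ι → R) {n : ℕ} (hn : Fintype.card ι < n) :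
    coeff n (esymSeries x) = 0 := by
  rw [coeff_esymSeries, esym, powersetCard_eq_empty.2 (by simpa using hn), sum_empty, mul_zero]

theorem coeff_hsymSeries (x : ι → R) (n : ℕ) : coeff n (hsymSeries x) = hsym x n := by
  rw [hsymSeries, coeff_prod, hsym]
  refine sum_bij' (fun l hl => (⟨l.toMultiset, ?_⟩ : Sym ι n))
      (fun μ _ => Multiset.toFinsupp μ.1) (fun _ _ => mem_univ _) ?_ ?_ ?_ ?_
  · rw [mem_finsuppAntidiag] at hl
    simpa [Finsupp.sum_fintype] using hl.1
  · intro μ _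
    refine mem_finsuppAntidiag.2 ⟨?_, subset_univ _⟩
    show ∑ i, Multiset.toFinsupp μ.1 i = n
    simp only [Multiset.toFinsupp_apply]
    exact (Multiset.sum_count_eq_card fun a _ => mem_univ a).trans μ.2
  · intro l _
    exact Finsupp.toMultiset_toFinsupp l
  · intro μ _
    exact Subtype.ext (Multiset.toFinsupp_toMultiset _)
  · intro l _
    simp only [prod_multiset_map_count, Finsupp.toFinset_toMultiset, Finsupp.count_toMultiset,
      coeff_mk]
    exact (Finsupp.prod_fintype l (fun i k => x i ^ k) fun _ => pow_zero _).symm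

theorem coeff_hsymSeries_mul_esymSeries (x : ι → R) (x' : κ → R) (n : ℕ) :
    coeff n (hsymSeries x * esymSeries x') = hdiff x x' n := by
  rw [coeff_mul, hdiff]
  refine sum_congr rfl fun p _ => ?_
  rw [coeff_hsymSeries, coeff_esymSeries]
  ring

end GeneratingFunctions

theorem coeff_mul_eq_sum_range_of_coeff_eq_zero {P Q : R⟦X⟧} {c n : ℕ}
    (hP : ∀ m, c < m → coeff m P = 0) (hn : c ≤ n) :
    coeff n (P * Q) = ∑ m ∈ range (c + 1), coeff m P * coeff (n - m) Q := by
  rw [coeff_mul, Nat.sum_antidiagonal_eq_sum_range_succ (fun a b => coeff a P * coeff b Q)]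
  refine (sum_subset (range_subset_range.2 (by omega)) fun m _ hm => ?_).symm
  rw [hP m (by simpa using hm), zero_mul]

theorem coeff_eq_sum_of_coeff_mul_eq_zero {E H F : R⟦X⟧} {c l : ℕ} (hEH : E * H = 1)
    (hE : ∀ i, c < i → coeff i E = 0) (hEF : ∀ m, c < m → coeff m (E * F) = 0) (hl : c < l) :
    coeff l F =
      ∑ k ∈ Icc 1 c, (∑ i ∈ range (c - k + 1), coeff i E * coeff (l - k - i) H) * coeff k F := by
  set g : ℕ → R := fun k =>
    (∑ i ∈ range (c + 1 - k), coeff i E * coeff (l - k - i) H) * coeff k F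
  have hg0 : g 0 = 0 := by
    simp only [g, Nat.sub_zero, ← coeff_mul_eq_sum_range_of_coeff_eq_zero hE hl.le, hEH,
      coeff_one, if_neg (by omega : l ≠ 0), zero_mul]
  calc coeff l F = coeff l (E * F * H) := by rw [mul_right_comm, hEH, one_mul]
    _ = ∑ m ∈ range (c + 1), ∑ k ∈ range (m + 1),
          coeff k F * coeff (m - k) E * coeff (l - k - (m - k)) H := by
      rw [coeff_mul_eq_sum_range_of_coeff_eq_zero hEF hl.le]
      refine sum_congr rfl fun m hm => ?_
      rw [mul_comm E, coeff_mul,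
        Nat.sum_antidiagonal_eq_sum_range_succ (fun a b => coeff a F * coeff b E), sum_mul]
      refine sum_congr rfl fun k hk => ?_
      rw [mem_range] at hm hk
      rw [show l - k - (m - k) = l - m by omega]
    _ = ∑ k ∈ range (c + 1), g k := by
      rw [sum_range_diag_flip (c + 1) fun k i => coeff k F * coeff i E * coeff (l - k - i) H]
      refine sum_congr rfl fun k _ => ?_
      simp only [g, sum_mul]
      exact sum_congr rfl fun i _ => by ring
    _ = _ := by
      rw [range_eq_Ico, sum_eq_sum_Ico_succ_bot (Nat.succ_pos c), hg0, zero_add,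
        Nat.succ_eq_add_one, Ico_add_one_right_eq_Icc]
      refine sum_congr rfl fun k hk => ?_
      rw [mem_Icc] at hk
      simp only [g, show c + 1 - k = c - k + 1 by omega]

theorem neg_one_pow_mul_hookS {ι : Type*} [Fintype ι] [DecidableEq ι] (x : ι → R) (n j : ℕ) :
    (-1) ^ j * hookS x n j =
      ∑ i ∈ range (j + 1), (-1) ^ i * esym x i * hsym x (n + j + 1 - i) := by
  rw [hookS, ← Nat.sum_antidiagonal_swap]
  simp only [Prod.fst_swap, Prod.snd_swap]
  rw [Nat.sum_antidiagonal_eq_sum_range_succ fun i a =>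
      (-1 : R) ^ a * hsym x (n + a + 1) * esym x i, mul_sum]
  refine sum_congr rfl fun i hi => ?_
  obtain ⟨t, rfl⟩ : ∃ t, j = i + t := ⟨j - i, by simp at hi; omega⟩
  have hsq : (-1 : R) ^ t * (-1) ^ t = 1 := by rw [← pow_add]; exact Even.neg_one_pow ⟨t, rfl⟩
  rw [Nat.add_sub_cancel_left, show n + (i + t) + 1 - i = n + t + 1 by omega]
  linear_combination ((-1) ^ i * esym x i * hsym x (n + t + 1)) * hsq

theorem hdiff_eq_sum_hookS_mul_hdiff {ι κ κ' : Type*} [Fintype ι] [DecidableEq ι] [Fintype κ]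
    [DecidableEq κ] [Fintype κ'] [DecidableEq κ'] (y : ι → R) (x : κ → R) (x' : κ' → R)
    {c l : ℕ} (hy : Fintype.card ι ≤ c)
    (hpoly : ∀ m, c < m → coeff m (esymSeries y * (hsymSeries x * esymSeries x')) = 0)
    (hl : c < l) :
    hdiff x x' l = ∑ k ∈ Icc 1 c, (-1) ^ (c - k) * hookS y (l - c - 1) (c - k) * hdiff x x' k := by
  rw [← coeff_hsymSeries_mul_esymSeries,
    coeff_eq_sum_of_coeff_mul_eq_zero (esymSeries_mul_hsymSeries y)
      (fun i hi => coeff_esymSeries_eq_zero y (by omega)) hpoly hl]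
  refine sum_congr rfl fun k hk => ?_
  rw [mem_Icc] at hk
  rw [neg_one_pow_mul_hookS, coeff_hsymSeries_mul_esymSeries]
  congr 1
  refine sum_congr rfl fun i hi => ?_
  rw [mem_range] at hi
  rw [coeff_esymSeries, coeff_hsymSeries, show l - c - 1 + (c - k) + 1 - i = l - k - i by omega]

theorem esymSeries_fin_eq_prod_Icc (x : ℕ → R) (c : ℕ) :
    esymSeries (fun j : Fin c => x (j + 1)) = ∏ i ∈ Icc 1 c, (1 - C (x i) * X) := by
  rw [esymSeries, Fin.prod_univ_eq_prod_range (fun j => 1 - C (x (j + 1)) * X), range_eq_Ico,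
    prod_Ico_add' (fun i => 1 - C (x i) * X), zero_add, Ico_add_one_right_eq_Icc]

theorem coeff_esymSeries_mul_hsymSeries_mul_esymSeries_eq_zero (c : ℕ) (x x' : ℕ → R)
    {S : Finset ℕ} (hS : S ⊆ Icc 1 c) {m : ℕ} (hm : c < m) :
    coeff m (esymSeries (fun j : Fin c => x (j + 1)) *
      (hsymSeries (fun j : S => x j) * esymSeries (fun j : S => x' j))) = 0 := by
  have hsplit : esymSeries (fun j : Fin c => x (j + 1)) =
      esymSeries (fun j : ↥(Icc 1 c \ S) => x j) * esymSeries (fun j : S => x j) := by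
    rw [esymSeries_fin_eq_prod_Icc, ← prod_sdiff hS]
    simp only [esymSeries, prod_coe_sort (f := fun i => 1 - C (x i) * X)]
  rw [hsplit, mul_assoc, ← mul_assoc (esymSeries fun j : S => x j), esymSeries_mul_hsymSeries,
    one_mul, ← esymSeries_sumElim]
  refine coeff_esymSeries_eq_zero _ ?_
  simp only [Fintype.card_sum, Fintype.card_coe, card_sdiff_add_card_eq_card hS, Nat.card_Icc]
  omega

theorem curvature_stability_general (c d : ℕ) (hcd : c ≤ d) (x x' v : ℕ → R)
    (S : Finset ℕ) (hS : S ⊆ Finset.Icc 1 c) :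
    ∑ k ∈ Finset.Icc 1 c, hdiff (fun j : S => x j) (fun j : S => x' j) k *
        (v k + (-1 : R) ^ (c - k) * ∑ l ∈ Finset.Icc (c + 1) d,
          hookS (fun j : Fin c => x ((j : ℕ) + 1)) (l - c - 1) (c - k) * v l) =
      ∑ k ∈ Finset.Icc 1 d, hdiff (fun j : S => x j) (fun j : S => x' j) k * v k := by
  set h := hdiff (fun j : S => x j) (fun j : S => x' j)
  have hreduce : ∀ l ∈ Icc (c + 1) d,
      ∑ k ∈ Icc 1 c, (-1) ^ (c - k) * hookS (fun j : Fin c => x (j + 1)) (l - c - 1) (c - k) * h k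
        = h l := fun l hl =>
    (hdiff_eq_sum_hookS_mul_hdiff _ _ _ (Fintype.card_fin c).le
      (fun _ => coeff_esymSeries_mul_hsymSeries_mul_esymSeries_eq_zero c x x' hS)
      (by rw [mem_Icc] at hl; omega)).symm
  calc _ = ∑ k ∈ Icc 1 c, h k * v k + ∑ l ∈ Icc (c + 1) d, ∑ k ∈ Icc 1 c,
        (-1) ^ (c - k) * hookS (fun j : Fin c => x (j + 1)) (l - c - 1) (c - k) * h k * v l := by
        simp only [mul_add, sum_add_distrib, mul_sum]
        rw [sum_comm]
        congr 1
        exact sum_congr rfl fun _ _ => sum_congr rfl fun _ _ => by ring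
    _ = ∑ k ∈ Icc 1 c, h k * v k + ∑ l ∈ Icc (c + 1) d, h l * v l := by
        simp only [← sum_mul, sum_congr rfl fun l hl => congrArg (· * v l) (hreduce l hl)]
    _ = _ := by
        simpa only [← Icc_add_one_left_eq_Ioc, zero_add] using
          sum_Ioc_consecutive (fun k => h k * v k) (Nat.zero_le c) hcd

theorem curvature_stability (c d : ℕ) (hc : 1 ≤ c) (hcd : c ≤ d) (x x' v : ℕ → R)
    (S : Finset ℕ) (hS : S ⊆ Finset.Icc 1 c) :
    ∑ k ∈ Finset.Icc 1 c, hdiff (fun j : S => x j) (fun j : S => x' j) k *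
        (v k + (-1 : R) ^ (c - k) * ∑ l ∈ Finset.Icc (c + 1) d,
          hookS (fun j : Fin c => x ((j : ℕ) + 1)) (l - c - 1) (c - k) * v l) =
      ∑ k ∈ Finset.Icc 1 d, hdiff (fun j : S => x j) (fun j : S => x' j) k * v k :=
  curvature_stability_general c d hcd x x' v S hS
end
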